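/- For any odd prime p, there exists a constant C such that |L_p(n)| ≤ C · log n for all n ≥ 2; in fact max_{n < p^i} |L_p(n)| = i · max_{n < p} |L_p(n)|. -/

import Mathlib

/-!
Off multiples of `p`, `λ_p` is the Legendre symbol `χ`, and `λ_p(p m) = λ_p(m)`. Splitting `[1, n]`
into multiples and non-multiples of `p` therefore gives `L_p(n) = S(n mod p) + L_p(⌊n / p⌋)`, where
`S(r) = ∑_{m ≤ r} χ(m)` depends only on `r mod p` because `χ` sums to zero over a period. So
`L_p(n)` is the sum of `S` over the base-`p` digits of `n`. For `n < p^i` there are at most `i`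
digits, which gives `|L_p(n)| ≤ i · max_{r < p} |S(r)|`, with equality when all `i` digits equal
a maximiser of `|S|`; since `n` has `log_p n + 1` digits, `|L_p(n)| = O(log n)`.
-/

open Finset Function

theorem Function.Periodic.sum_Ico_add_eq_sum_range {M : Type*} [AddCommMonoid M] {χ : ℕ → M}
    {a : ℕ} (hχ : Periodic χ a) (n : ℕ) : ∑ m ∈ Ico n (n + a), χ m = ∑ m ∈ range a, χ m := by
  rw [sum_eq_multiset_sum, sum_eq_multiset_sum, range_val, ← Nat.multiset_Ico_map_mod n a,
    Multiset.map_map]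
  exact congrArg Multiset.sum (Multiset.map_congr rfl fun m _ => (hχ.map_mod_nat m).symm)

theorem Function.Periodic.sum_range_eq_sum_range_mod {M : Type*} [AddCommMonoid M] {χ : ℕ → M}
    {a : ℕ} (hχ : Periodic χ a) (hsum : ∑ m ∈ range a, χ m = 0) (n : ℕ) :
    ∑ m ∈ range n, χ m = ∑ m ∈ range (n % a), χ m := by
  induction n using Nat.strong_induction_on with
  | _ n ih =>
    rcases lt_or_ge n a with hn | hn
    · rw [Nat.mod_eq_of_lt hn]
    · obtain ⟨k, rfl⟩ := Nat.exists_eq_add_of_le' hn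
      rcases Nat.eq_zero_or_pos a with rfl | ha
      · simp
      rw [← sum_range_add_sum_Ico _ (Nat.le_add_right k a), hχ.sum_Ico_add_eq_sum_range, hsum,
        add_zero, Nat.add_mod_right, ih k (by omega)]

theorem ZMod.sum_range_natCast {M : Type*} [AddCommMonoid M] {n : ℕ} [NeZero n]
    (ψ : ZMod n → M) : ∑ i ∈ range n, ψ i = ∑ x, ψ x :=
  sum_nbij' (↑) ZMod.val (fun _ _ => mem_univ _) (fun x _ => mem_range.2 x.val_lt)
    (fun _ hi => ZMod.val_cast_of_lt (mem_range.1 hi)) (fun x _ => ZMod.natCast_zmod_val x)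
    fun _ _ => rfl

theorem Nat.filter_dvd_Icc_one_eq_map {p : ℕ} (hp : 0 < p) (n : ℕ) :
    {m ∈ Icc 1 n | p ∣ m} = (Icc 1 (n / p)).map ⟨(p * ·), mul_right_injective₀ hp.ne'⟩ := by
  ext m
  simp only [mem_filter, mem_Icc, mem_map, Function.Embedding.coeFn_mk]
  constructor
  · rintro ⟨⟨h1, h2⟩, j, rfl⟩
    refine ⟨j, ⟨Nat.pos_of_mul_pos_left h1, ?_⟩, rfl⟩
    rw [Nat.le_div_iff_mul_le hp, mul_comm]; exact h2
  · rintro ⟨j, ⟨h1, h2⟩, rfl⟩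
    refine ⟨⟨Nat.mul_pos hp h1, ?_⟩, dvd_mul_right p j⟩
    rw [Nat.le_div_iff_mul_le hp, mul_comm] at h2; exact h2

section DigitRecursion

variable {b : ℕ} {g L : ℕ → ℤ}

theorem apply_ofDigits_of_rec (hb : 0 < b) (h0 : L 0 = 0)
    (hL : ∀ n, L n = g (n % b) + L (n / b)) {l : List ℕ} (hl : ∀ d ∈ l, d < b) :
    L (Nat.ofDigits b l) = (l.map g).sum := by
  induction l with
  | nil => simpa using h0
  | cons d l ih =>
    have hd : d < b := hl d (by simp)
    rw [Nat.ofDigits_cons, hL, Nat.add_mul_mod_self_left, Nat.mod_eq_of_lt hd,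
      Nat.add_mul_div_left _ _ hb, Nat.div_eq_of_lt hd, zero_add,
      ih fun e he => hl e (List.mem_cons_of_mem d he), List.map_cons, List.sum_cons]

theorem eq_sum_map_digits_of_rec (hb : 1 < b) (h0 : L 0 = 0)
    (hL : ∀ n, L n = g (n % b) + L (n / b)) (n : ℕ) :
    L n = ((b.digits n).map g).sum := by
  conv_lhs => rw [← Nat.ofDigits_digits b n]
  exact apply_ofDigits_of_rec (by omega) h0 hL fun d hd => Nat.digits_lt_base hb hd

theorem natAbs_sum_map_le_length_mul_sup {l : List ℕ} (hl : ∀ d ∈ l, d < b) :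
    (l.map g).sum.natAbs ≤ l.length * (range b).sup fun d => (g d).natAbs := by
  induction l with
  | nil => simp
  | cons d l ih =>
    have hd : (g d).natAbs ≤ (range b).sup fun d => (g d).natAbs :=
      le_sup (f := fun d => (g d).natAbs) (mem_range.2 (hl d (by simp)))
    have htail := ih fun e he => hl e (List.mem_cons_of_mem d he)
    simp only [List.map_cons, List.sum_cons, List.length_cons]
    grw [Int.natAbs_add_le, hd, htail]
    rw [add_one_mul, add_comm]

theorem sup_range_pow_natAbs_of_rec (hb : 1 < b) (h0 : L 0 = 0)
    (hL : ∀ n, L n = g (n % b) + L (n / b)) (i : ℕ) :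
    ((range (b ^ i)).sup fun n => (L n).natAbs) = i * (range b).sup fun n => (L n).natAbs := by
  have hLg : ∀ d < b, L d = g d := fun d hd => by
    rw [hL, Nat.mod_eq_of_lt hd, Nat.div_eq_of_lt hd, h0, add_zero]
  have hsup : ((range b).sup fun n => (L n).natAbs) = (range b).sup fun d => (g d).natAbs :=
    sup_congr rfl fun d hd => by rw [hLg d (mem_range.1 hd)]
  rw [hsup]
  refine le_antisymm (Finset.sup_le fun n hn => ?_) ?_
  · rw [eq_sum_map_digits_of_rec hb h0 hL]
    refine (natAbs_sum_map_le_length_mul_sup fun d hd => Nat.digits_lt_base hb hd).trans ?_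
    gcongr
    exact (Nat.digits_length_le_iff hb n).2 (mem_range.1 hn)
  · obtain ⟨r, hr, hrM⟩ := exists_mem_eq_sup (range b) (nonempty_range_iff.2 (by omega))
      fun d => (g d).natAbs
    have hrb : r < b := mem_range.1 hr
    have hdig : ∀ d ∈ List.replicate i r, d < b := fun d hd => (List.eq_of_mem_replicate hd) ▸ hrb
    have hval : L (Nat.ofDigits b (List.replicate i r)) = i * g r := by
      rw [apply_ofDigits_of_rec (by omega) h0 hL hdig, List.map_replicate, List.sum_replicate,
        nsmul_eq_mul]
    rw [hrM]
    calc i * (g r).natAbs = (L (Nat.ofDigits b (List.replicate i r))).natAbs := by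
          rw [hval, Int.natAbs_mul, Int.natAbs_natCast]
      _ ≤ _ := le_sup (f := fun n => (L n).natAbs) <| mem_range.2 <| by
          simpa using Nat.ofDigits_lt_base_pow_length hb hdig

theorem natLog_add_one_le_mul_log {b n : ℕ} (hn : 2 ≤ n) :
    (Nat.log b n + 1 : ℝ) ≤ (1 / Real.log b + 1 / Real.log 2) * Real.log n := by
  have hlog2 : Real.log 2 ≤ Real.log n := Real.log_le_log (by norm_num) (by exact_mod_cast hn)
  have h1 : (Nat.log b n : ℝ) ≤ Real.log n / Real.log b := Real.natLog_le_logb n b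
  have h2 : (1 : ℝ) ≤ Real.log n / Real.log 2 := by
    rw [le_div_iff₀ (Real.log_pos (by norm_num)), one_mul]; exact hlog2
  calc (Nat.log b n + 1 : ℝ) ≤ Real.log n / Real.log b + Real.log n / Real.log 2 := by linarith
    _ = _ := by ring

theorem exists_abs_le_mul_log_of_rec (hb : 1 < b) (h0 : L 0 = 0)
    (hL : ∀ n, L n = g (n % b) + L (n / b)) :
    ∃ C : ℝ, ∀ n : ℕ, 2 ≤ n → |(L n : ℝ)| ≤ C * Real.log n := by
  set M := (range b).sup fun d => (g d).natAbs
  refine ⟨M * (1 / Real.log b + 1 / Real.log 2), fun n hn => ?_⟩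
  have hbound : (L n).natAbs ≤ (Nat.log b n + 1) * M := by
    rw [eq_sum_map_digits_of_rec hb h0 hL, ← Nat.length_digits b n hb (by omega)]
    exact natAbs_sum_map_le_length_mul_sup fun d hd => Nat.digits_lt_base hb hd
  calc |(L n : ℝ)| = ((L n).natAbs : ℝ) := by rw [Nat.cast_natAbs, Int.cast_abs]
    _ ≤ (Nat.log b n + 1 : ℝ) * M := by exact_mod_cast hbound
    _ ≤ _ := by
      rw [mul_comm, mul_assoc]
      gcongr
      exact natLog_add_one_le_mul_log hn

end DigitRecursion

section Legendre

variable {p : ℕ} [Fact p.Prime]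

theorem periodic_legendreSym_natCast : Periodic (fun m : ℕ => legendreSym p m) p := fun m => by
  simp [legendreSym]

theorem sum_range_legendreSym (hp : p ≠ 2) : ∑ m ∈ range p, legendreSym p m = 0 := by
  have hchar : ringChar (ZMod p) ≠ 2 := by rwa [ZMod.ringChar_zmod_n]
  simpa [legendreSym] using
    (ZMod.sum_range_natCast (quadraticChar (ZMod p))).trans (quadraticChar_sum_zero hchar)

theorem sum_Icc_legendreSym_mod (hp : p ≠ 2) (n : ℕ) :
    ∑ m ∈ Icc 1 n, legendreSym p m = ∑ m ∈ Icc 1 (n % p), legendreSym p m := by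
  have hshift (k : ℕ) :
      ∑ m ∈ Icc 1 k, legendreSym p m = ∑ m ∈ range k, legendreSym p ↑(m + 1) := by
    rw [range_eq_Ico, sum_Ico_add' (fun m : ℕ => legendreSym p m), ← Ico_add_one_right_eq_Icc]
  have hχ : Periodic (fun m : ℕ => legendreSym p ↑(m + 1)) p :=
    periodic_legendreSym_natCast.add_const 1
  have hsum : ∑ m ∈ range p, legendreSym p ↑(m + 1) = 0 := by
    rw [← hshift, ← Ico_add_one_right_eq_Icc, add_comm,
      periodic_legendreSym_natCast.sum_Ico_add_eq_sum_range, sum_range_legendreSym hp]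
  rw [hshift, hshift, hχ.sum_range_eq_sum_range_mod hsum]

theorem eq_legendreSym_of_not_dvd {f : ℕ → ℤ} (hf1 : f 1 = 1)
    (hfmul : ∀ m n, f (m * n) = f m * f n)
    (hfq : ∀ q : ℕ, q.Prime → q ≠ p → f q = legendreSym p q) {m : ℕ} (hm : ¬ p ∣ m) :
    f m = legendreSym p m := by
  induction m using induction_on_primes with
  | zero => exact absurd (dvd_zero p) hm
  | one => simp [hf1]
  | prime_mul q a hq ih =>
    have hqp : q ≠ p := fun h => hm (h ▸ dvd_mul_right q a)
    rw [hfmul, hfq q hq hqp, ih fun h => hm (h.mul_left q), Nat.cast_mul, legendreSym.mul]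

theorem sum_Icc_eq_sum_Icc_legendreSym_add_sum_Icc_div {f : ℕ → ℤ}
    (hfmul : ∀ m n, f (m * n) = f m * f n) (hfp : f p = 1)
    (hfχ : ∀ m, ¬ p ∣ m → f m = legendreSym p m) (n : ℕ) :
    ∑ m ∈ Icc 1 n, f m = ∑ m ∈ Icc 1 n, legendreSym p m + ∑ m ∈ Icc 1 (n / p), f m := by
  have hp : 0 < p := (Fact.out : p.Prime).pos
  have hcoprime : ∑ m ∈ Icc 1 n with ¬ p ∣ m, f m = ∑ m ∈ Icc 1 n, legendreSym p m := by
    rw [sum_filter]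
    refine sum_congr rfl fun m _ => ?_
    split_ifs with h
    · rw [eq_comm, legendreSym.eq_zero_iff, Int.cast_natCast, ZMod.natCast_eq_zero_iff]
      exact h
    · exact hfχ m h
  have hmultiples : ∑ m ∈ Icc 1 n with p ∣ m, f m = ∑ m ∈ Icc 1 (n / p), f m := by
    rw [Nat.filter_dvd_Icc_one_eq_map hp, sum_map]
    simp only [Function.Embedding.coeFn_mk, hfmul, hfp, one_mul]
  rw [← sum_filter_not_add_sum_filter _ (p ∣ ·), hcoprime, hmultiples]

end Legendre

/-- `|L_p(n)| ≪ log n`; in fact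
`max_{n < p^i} |L_p(n)| = i · max_{n < p} |L_p(n)|`. -/
theorem stmt_19 (p : ℕ) [Fact p.Prime] (hodd : p ≠ 2)
    (f : ℕ → ℤ) (hf1 : f 1 = 1) (hfmul : ∀ m n, f (m * n) = f m * f n)
    (hfp : f p = 1) (hfq : ∀ q : ℕ, q.Prime → q ≠ p → f q = legendreSym p q) :
    (∃ C : ℝ, ∀ n : ℕ, 2 ≤ n →
        |(∑ m ∈ Finset.Icc 1 n, f m : ℝ)| ≤ C * Real.log n) ∧
      ∀ i : ℕ,
        ((Finset.range (p ^ i)).sup fun n => (∑ m ∈ Finset.Icc 1 n, f m).natAbs)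
          = i * ((Finset.range p).sup fun n => (∑ m ∈ Finset.Icc 1 n, f m).natAbs) := by
  have hp : 1 < p := (Fact.out : p.Prime).one_lt
  set S : ℕ → ℤ := fun n => ∑ m ∈ Icc 1 n, legendreSym p m
  have hrec (n : ℕ) : ∑ m ∈ Icc 1 n, f m = S (n % p) + ∑ m ∈ Icc 1 (n / p), f m := by
    rw [sum_Icc_eq_sum_Icc_legendreSym_add_sum_Icc_div hfmul hfp
      (fun _ => eq_legendreSym_of_not_dvd hf1 hfmul hfq), sum_Icc_legendreSym_mod hodd]
  have h0 : ∑ m ∈ Icc 1 0, f m = 0 := by simp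
  refine ⟨?_, sup_range_pow_natAbs_of_rec hp h0 hrec⟩
  obtain ⟨C, hC⟩ := exists_abs_le_mul_log_of_rec (L := fun n => ∑ m ∈ Icc 1 n, f m) hp h0 hrec
  exact ⟨C, fun n hn => by simpa using hC n hn⟩
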